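/- arXiv:1512.06724 — 2 statements merged into one kernel-verified Lean document; each statement's English description precedes it below -/
import Mathlib

section
/- Let n ≥ 3, let f₁,...,fₙ : ℝⁿ → ℝ be smooth with 3fᵢ + fⱼ nowhere zero for i ≠ j, and let φ be a smooth positive solution of the system φ_{,xᵢxᵢ}/φ − |∇φ|²/(2φ²) = φ² fᵢ, φ_{,xᵢxⱼ} = 0 (i ≠ j). Then for all i ≠ j: (f_{j,xᵢ}/(3fⱼ + fᵢ)) · (f_{i,xⱼ}/(3fᵢ + fⱼ)) = ∂/∂xᵢ ( f_{i,xⱼ}/(3fᵢ + fⱼ) ). -/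
noncomputable def pd {n : ℕ} (φ : (Fin n → ℝ) → ℝ) (i : Fin n) (x : Fin n → ℝ) : ℝ :=
  fderiv ℝ φ x (Pi.single i 1)

variable {n : ℕ} {g h : (Fin n → ℝ) → ℝ} {k : Fin n} {x : Fin n → ℝ}

lemma contDiff_pd (hg : ContDiff ℝ (⊤ : ℕ∞) g) (k : Fin n) : ContDiff ℝ (⊤ : ℕ∞) (pd g k) := by
  have h1 : ContDiff ℝ (⊤ : ℕ∞) (fderiv ℝ g) := hg.fderiv_right (by simp)
  exact h1.clm_apply contDiff_const

lemma pd_comm (hg : ContDiff ℝ (⊤ : ℕ∞) g) (a b : Fin n) (x : Fin n → ℝ) :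
    pd (pd g a) b x = pd (pd g b) a x := by
  have hdiff : Differentiable ℝ g := hg.differentiable (by simp)
  have h1 : ContDiff ℝ (⊤ : ℕ∞) (fderiv ℝ g) := hg.fderiv_right (by simp)
  have hsym := second_derivative_symmetric (f := g) (f' := fderiv ℝ g)
    (f'' := fderiv ℝ (fderiv ℝ g) x) (fun y => (hdiff y).hasFDerivAt)
    ((h1.differentiable (by simp) x).hasFDerivAt)
  have key : ∀ a b : Fin n, pd (pd g a) b x
      = fderiv ℝ (fderiv ℝ g) x (Pi.single b 1) (Pi.single a 1) := by
    intro a b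
    have : pd (pd g a) b x
        = fderiv ℝ (fun y => (fderiv ℝ g y) (Pi.single a 1)) x (Pi.single b 1) := rfl
    rw [this, fderiv_clm_apply (h1.differentiable (by simp) x) (differentiableAt_const _)]
    simp
  rw [key, key, hsym]

lemma pd_mul (hg : DifferentiableAt ℝ g x) (hh : DifferentiableAt ℝ h x) :
    pd (fun y => g y * h y) k x = pd g k x * h x + g x * pd h k x := by
  unfold pd
  rw [fderiv_fun_mul hg hh]
  simp; ring

lemma pd_add (hg : DifferentiableAt ℝ g x) (hh : DifferentiableAt ℝ h x) :
    pd (fun y => g y + h y) k x = pd g k x + pd h k x := by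
  unfold pd
  rw [fderiv_fun_add hg hh]; simp

lemma pd_sub (hg : DifferentiableAt ℝ g x) (hh : DifferentiableAt ℝ h x) :
    pd (fun y => g y - h y) k x = pd g k x - pd h k x := by
  unfold pd
  rw [fderiv_fun_sub hg hh]; simp

lemma pd_const_mul (c : ℝ) (hg : DifferentiableAt ℝ g x) :
    pd (fun y => c * g y) k x = c * pd g k x := by
  unfold pd
  rw [fderiv_const_mul hg]; simp

lemma pd_sq (hg : DifferentiableAt ℝ g x) :
    pd (fun y => g y ^ 2) k x = 2 * g x * pd g k x := by
  have : (fun y => g y ^ 2) = fun y => g y * g y := by funext y; ring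
  rw [this, pd_mul hg hg]; ring

lemma pd_pow4 (hg : DifferentiableAt ℝ g x) :
    pd (fun y => g y ^ 4) k x = 4 * g x ^ 3 * pd g k x := by
  have : (fun y => g y ^ 4) = fun y => (g y ^ 2) ^ 2 := by funext y; ring
  rw [this, pd_sq (g := fun y => g y ^ 2) (hg.pow 2), pd_sq hg]; ring

lemma pd_inv (hh : DifferentiableAt ℝ h x) (hz : h x ≠ 0) :
    pd (fun y => (h y)⁻¹) k x = -pd h k x / h x ^ 2 := by
  have H := (hasDerivAt_inv hz).comp_hasFDerivAt x hh.hasFDerivAt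
  have H2 : HasFDerivAt (fun y => (h y)⁻¹) (-(h x ^ 2)⁻¹ • fderiv ℝ h x) x := H
  unfold pd
  rw [H2.fderiv]
  simp only [ContinuousLinearMap.smul_apply, smul_eq_mul]
  field_simp

lemma pd_div (hg : DifferentiableAt ℝ g x) (hh : DifferentiableAt ℝ h x) (hz : h x ≠ 0) :
    pd (fun y => g y / h y) k x = (pd g k x * h x - g x * pd h k x) / h x ^ 2 := by
  have : (fun y => g y / h y) = fun y => g y * (h y)⁻¹ := by funext y; ring
  rw [this, pd_mul (h := fun y => (h y)⁻¹) hg (hh.inv hz), pd_inv hh hz]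
  field_simp; ring

lemma pd_neg : pd (fun y => -(g y)) k x = - pd g k x := by
  unfold pd
  rw [fderiv_fun_neg]; simp

lemma pd_zero : pd (fun _ => (0:ℝ)) k x = 0 := by
  unfold pd; simp

lemma pd_finsum {A : Fin n → (Fin n → ℝ) → ℝ} (hA : ∀ m, DifferentiableAt ℝ (A m) x) :
    pd (fun y => ∑ m, A m y) k x = ∑ m, pd (A m) k x := by
  unfold pd
  rw [fderiv_fun_sum (fun m _ => hA m)]; simp

lemma key_lemma (n : ℕ)
    (f : Fin n → (Fin n → ℝ) → ℝ)
    (hf : ∀ i, ContDiff ℝ (⊤ : ℕ∞) (f i))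
    (φ : (Fin n → ℝ) → ℝ) (hφs : ContDiff ℝ (⊤ : ℕ∞) φ) (hφpos : ∀ x, 0 < φ x)
    (heq : ∀ i : Fin n, ∀ x, pd (pd φ i) i x / φ x
      - (∑ k, (pd φ k x) ^ 2) / (2 * φ x ^ 2) = φ x ^ 2 * f i x)
    (hmix : ∀ i j : Fin n, i ≠ j → ∀ x, pd (pd φ j) i x = 0) :
    ∀ i j : Fin n, i ≠ j → ∀ x,
      pd φ j x * (3 * f i x + f j x) = -(φ x * pd (f i) j x) := by
  intro i j hij x
  have dφ : Differentiable ℝ φ := hφs.differentiable (by simp)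
  have hφ1 : ∀ k, ContDiff ℝ (⊤ : ℕ∞) (pd φ k) := fun k => contDiff_pd hφs k
  have dφ1 : ∀ k, Differentiable ℝ (pd φ k) := fun k => (hφ1 k).differentiable (by simp)
  have hφ2 : ∀ k l, ContDiff ℝ (⊤ : ℕ∞) (pd (pd φ k) l) := fun k l => contDiff_pd (hφ1 k) l
  have dφ2 : ∀ k l, Differentiable ℝ (pd (pd φ k) l) :=
    fun k l => (hφ2 k l).differentiable (by simp)
  have df : ∀ m, Differentiable ℝ (f m) := fun m => (hf m).differentiable (by simp)
  have hφne : ∀ y, φ y ≠ 0 := fun y => (hφpos y).ne'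
  -- polynomial form of the equation, for index m, as a function identity
  have hH : ∀ m : Fin n, (fun y => 2 * φ y * pd (pd φ m) m y)
      = fun y => (∑ k, pd φ k y ^ 2) + 2 * φ y ^ 4 * f m y := by
    intro m
    funext y
    have h := heq m y
    have h2 := hφne y
    have h3 : φ y * (2 * φ y * pd (pd φ m) m y)
        = φ y * ((∑ k, pd φ k y ^ 2) + 2 * φ y ^ 4 * f m y) := by
      field_simp at h
      linear_combination φ y * h
    exact mul_left_cancel₀ h2 h3
  -- differentiate hH i in direction j at x
  have hDL := congrArg (fun F => pd F j x) (hH i)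
  -- compute left side
  have dc2φ : Differentiable ℝ (fun y => 2 * φ y) := dφ.const_mul 2
  have hL : pd (fun y => 2 * φ y * pd (pd φ i) i y) j x
      = 2 * pd φ j x * pd (pd φ i) i x + 2 * φ x * pd (pd (pd φ i) i) j x := by
    rw [pd_mul (dc2φ x) (dφ2 i i x), pd_const_mul 2 (dφ x)]
    try ring
  -- third derivative vanishes
  have h0fun : pd (pd φ i) j = fun _ => (0:ℝ) :=
    funext fun y => (pd_comm hφs i j y).trans (hmix i j hij y)
  have hP3 : pd (pd (pd φ i) i) j x = 0 := by
    rw [pd_comm (hφ1 i) i j, h0fun, pd_zero]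
  -- derivative of the sum of squares
  have hQ : pd (fun y => ∑ k, pd φ k y ^ 2) j x = 2 * pd φ j x * pd (pd φ j) j x := by
    rw [pd_finsum (A := fun m y => pd φ m y ^ 2) (fun m => ((dφ1 m).pow 2).differentiableAt)]
    rw [Finset.sum_eq_single j]
    · exact pd_sq (dφ1 j x)
    · intro m _ hm
      rw [pd_sq (dφ1 m x), pd_comm hφs m j, hmix m j hm x]
      ring
    · intro hj; exact absurd (Finset.mem_univ j) hj
  -- derivative of the RHS
  have dφ4 : Differentiable ℝ (fun y => 2 * φ y ^ 4) := (dφ.pow 4).const_mul 2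
  have hR : pd (fun y => (∑ k, pd φ k y ^ 2) + 2 * φ y ^ 4 * f i y) j x
      = 2 * pd φ j x * pd (pd φ j) j x
        + (2 * (4 * φ x ^ 3 * pd φ j x)) * f i x + 2 * φ x ^ 4 * pd (f i) j x := by
    have d1 : DifferentiableAt ℝ (fun y => ∑ k, pd φ k y ^ 2) x := by
      exact (Differentiable.fun_sum fun m _ => (dφ1 m).pow 2) x
    have d2 : DifferentiableAt ℝ (fun y => 2 * φ y ^ 4 * f i y) x :=
      (dφ4.mul (df i)) x
    rw [pd_add d1 d2, hQ, pd_mul (dφ4 x) ((df i) x), pd_const_mul 2 (g := fun y => φ y ^ 4) ((dφ.pow 4) x),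
      pd_pow4 (dφ x)]
    ring
  rw [hL, hR, hP3] at hDL
  -- polynomial forms of the equation at x, for i and j
  have hEi := congrFun (hH i) x
  have hEj := congrFun (hH j) x
  -- final algebra
  have hp := hφne x
  have main : φ x ^ 4 * (pd φ j x * (3 * f i x + f j x) + φ x * pd (f i) j x) = 0 := by
    linear_combination (-(φ x / 2)) * hDL + (pd φ j x / 2) * hEi - (pd φ j x / 2) * hEj
  have h4 : φ x ^ 4 ≠ 0 := pow_ne_zero 4 hp
  have := (mul_eq_zero.mp main).resolve_left h4
  linarith

theorem stmt3 (n : ℕ) (hn : 3 ≤ n)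
    (f : Fin n → (Fin n → ℝ) → ℝ)
    (hf : ∀ i, ContDiff ℝ (⊤ : ℕ∞) (f i))
    (hne : ∀ i j : Fin n, i ≠ j → ∀ x, 3 * f i x + f j x ≠ 0)
    (φ : (Fin n → ℝ) → ℝ) (hφs : ContDiff ℝ (⊤ : ℕ∞) φ) (hφpos : ∀ x, 0 < φ x)
    (heq : ∀ i : Fin n, ∀ x, pd (pd φ i) i x / φ x
      - (∑ k, (pd φ k x) ^ 2) / (2 * φ x ^ 2) = φ x ^ 2 * f i x)
    (hmix : ∀ i j : Fin n, i ≠ j → ∀ x, pd (pd φ j) i x = 0) :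
    ∀ i j : Fin n, i ≠ j → ∀ x,
      (pd (f j) i x / (3 * f j x + f i x)) * (pd (f i) j x / (3 * f i x + f j x))
        = pd (fun y => pd (f i) j y / (3 * f i y + f j y)) i x := by
  intro i j hij x
  have dφ : Differentiable ℝ φ := hφs.differentiable (by simp)
  have hφ1 : ∀ k, ContDiff ℝ (⊤ : ℕ∞) (pd φ k) := fun k => contDiff_pd hφs k
  have dφ1 : ∀ k, Differentiable ℝ (pd φ k) := fun k => (hφ1 k).differentiable (by simp)
  have hφne : ∀ y, φ y ≠ 0 := fun y => (hφpos y).ne'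
  have key := key_lemma n f hf φ hφs hφpos heq hmix
  have hA : (fun y => pd (f i) j y / (3 * f i y + f j y)) = fun y => -(pd φ j y / φ y) := by
    funext y
    have hk := key i j hij y
    have h1 : 3 * f i y + f j y ≠ 0 := hne i j hij y
    have h2 := hφne y
    field_simp
    linear_combination hk
  have hA' : pd (f i) j x / (3 * f i x + f j x) = -(pd φ j x / φ x) := by
    have := congrFun hA x
    simpa using this
  have hB : pd (f j) i x / (3 * f j x + f i x) = -(pd φ i x / φ x) := by
    have hk := key j i hij.symm x
    have h1 := hne j i hij.symm x
    have h2 := hφne x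
    field_simp
    linear_combination hk
  rw [hA, hA', hB, pd_neg, pd_div (dφ1 j x) (dφ x) (hφne x), hmix i j hij x]
  field_simp
  ring
end

section
/- Let n ≥ 3 and suppose all functions fᵢ are equal to a single nonvanishing smooth function f : ℝⁿ → ℝ (so that 4f ≠ 0), and φ is a smooth positive solution of φ_{,xᵢxᵢ}/φ − |∇φ|²/(2φ²) = φ² f for every i and φ_{,xᵢxⱼ} = 0 for i ≠ j. Then the function φ⁴ f is constant on ℝⁿ. -/
lemma pd_smooth {n : ℕ} {φ : (Fin n → ℝ) → ℝ} (h : ContDiff ℝ (⊤ : ℕ∞) φ) (i : Fin n) :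
    ContDiff ℝ (⊤ : ℕ∞) (pd φ i) :=
  (h.fderiv_right (by simp)).clm_apply contDiff_const

lemma pd_comm_s7 {n : ℕ} {ψ : (Fin n → ℝ) → ℝ} (h : ContDiff ℝ (⊤ : ℕ∞) ψ) (i j : Fin n) (x : Fin n → ℝ) :
    pd (pd ψ i) j x = pd (pd ψ j) i x := by
  have hd : ContDiff ℝ (⊤ : ℕ∞) (fderiv ℝ ψ) := h.fderiv_right (by simp)
  have hsymm : IsSymmSndFDerivAt ℝ ψ x := h.contDiffAt.isSymmSndFDerivAt (by
    rw [minSmoothness_of_isRCLikeNormedField]; exact WithTop.coe_le_coe.mpr le_top)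
  have key : ∀ a b : Fin n, pd (pd ψ a) b x
      = fderiv ℝ (fderiv ℝ ψ) x (Pi.single b 1) (Pi.single a 1) := by
    intro a b
    have : pd ψ a = fun y => (fderiv ℝ ψ y) (Pi.single a 1) := rfl
    rw [show pd (pd ψ a) b x = fderiv ℝ (fun y => (fderiv ℝ ψ y) (Pi.single a 1)) x
      (Pi.single b 1) from rfl]
    rw [fderiv_clm_apply (hd.differentiable (by simp) x) (differentiableAt_const _)]
    simp
  rw [key, key, hsymm]

theorem stmt7 (n : ℕ) (hn : 3 ≤ n)
    (f : (Fin n → ℝ) → ℝ) (hf : ContDiff ℝ (⊤ : ℕ∞) f) (hfne : ∀ x, f x ≠ 0)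
    (φ : (Fin n → ℝ) → ℝ) (hφs : ContDiff ℝ (⊤ : ℕ∞) φ) (hφpos : ∀ x, 0 < φ x)
    (heq : ∀ i : Fin n, ∀ x, pd (pd φ i) i x / φ x
      - (∑ k, (pd φ k x) ^ 2) / (2 * φ x ^ 2) = φ x ^ 2 * f x)
    (hmix : ∀ i j : Fin n, i ≠ j → ∀ x, pd (pd φ j) i x = 0) :
    ∃ c : ℝ, ∀ x, φ x ^ 4 * f x = c := by
  have hn0 : 0 < n := by omega
  -- smoothness of iterated partials
  have hpd : ∀ i, ContDiff ℝ (⊤ : ℕ∞) (pd φ i) := pd_smooth hφs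
  have hpd2 : ∀ i j, ContDiff ℝ (⊤ : ℕ∞) (pd (pd φ i) j) := fun i j => pd_smooth (hpd i) j
  -- all diagonal second derivatives are equal
  have hdiag : ∀ i j : Fin n, ∀ x, pd (pd φ i) i x = pd (pd φ j) j x := by
    intro i j x
    have h1 := heq i x
    have h2 := heq j x
    have hφx := (hφpos x).ne'
    have : pd (pd φ i) i x / φ x = pd (pd φ j) j x / φ x := by linarith [h1, h2]
    field_simp at this
    exact this
  -- the function g = φ⁴ f, expressed via G i
  set g : (Fin n → ℝ) → ℝ := fun x => φ x * pd (pd φ ⟨0, hn0⟩) ⟨0, hn0⟩ x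
      - (∑ k, (pd φ k x) ^ 2) * (2:ℝ)⁻¹ with hg
  have hgeq : ∀ x, φ x ^ 4 * f x = g x := by
    intro x
    have h1 := heq ⟨0, hn0⟩ x
    have hφx := (hφpos x).ne'
    field_simp at h1
    have key : (2 * φ x ^ 3) * (φ x ^ 4 * f x) = (2 * φ x ^ 3) * g x := by
      rw [hg]
      linear_combination -(φ x ^ 3) * h1
    have h2 : (2 * φ x ^ 3) ≠ 0 := by positivity
    exact mul_left_cancel₀ h2 key
  -- g is differentiable
  have hsumdiff : Differentiable ℝ (fun y => ∑ k, (pd φ k y) ^ 2) :=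
    Differentiable.fun_sum fun k _ => ((hpd k).differentiable (by simp)).pow 2
  have hgdiff : Differentiable ℝ g :=
    ((hφs.differentiable (by simp)).mul ((hpd2 _ _).differentiable (by simp))).sub
      (hsumdiff.mul_const _)
  -- directional derivatives of g vanish
  have hdir : ∀ (j : Fin n) (x), fderiv ℝ g x (Pi.single j 1) = 0 := by
    intro j x
    -- choose i ≠ j
    have : Nontrivial (Fin n) := Fin.nontrivial_iff_two_le.mpr (by omega)
    obtain ⟨i, hij⟩ : ∃ i : Fin n, i ≠ j := exists_ne j
    -- g equals the version with index i
    have hgi : g = fun x => φ x * pd (pd φ i) i x - (∑ k, (pd φ k x) ^ 2) * (2:ℝ)⁻¹ := by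
      funext y
      rw [hg]
      simp only [hdiag ⟨0, hn0⟩ i y]
    rw [hgi]
    -- compute the derivative
    have d1 : DifferentiableAt ℝ φ x := (hφs.differentiable (by simp)) x
    have d2 : DifferentiableAt ℝ (pd (pd φ i) i) x := ((hpd2 i i).differentiable (by simp)) x
    have dsum : DifferentiableAt ℝ (fun y => (∑ k, (pd φ k y) ^ 2)) x := hsumdiff x
    rw [fderiv_fun_sub (d1.fun_mul d2) (dsum.mul_const _), fderiv_fun_mul d1 d2]
    rw [fderiv_mul_const dsum, fderiv_fun_sum (fun k _ => (((hpd k).differentiable (by simp)) x).fun_pow 2)]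
    have hpow : ∀ k : Fin n, (fderiv ℝ (fun y => (pd φ k y) ^ 2) x) (Pi.single j 1)
        = 2 * pd φ k x * pd (pd φ k) j x := by
      intro k
      have dk := ((hpd k).differentiable (by simp)) x
      have hsq : (fun y => pd φ k y ^ 2) = fun y => pd φ k y * pd φ k y := by
        funext y; ring
      rw [hsq, fderiv_fun_mul dk dk]
      simp only [ContinuousLinearMap.add_apply, ContinuousLinearMap.smul_apply, smul_eq_mul]
      show pd φ k x * pd (pd φ k) j x + pd φ k x * pd (pd φ k) j x = _
      ring
    simp only [ContinuousLinearMap.sub_apply, ContinuousLinearMap.add_apply,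
      ContinuousLinearMap.smul_apply, ContinuousLinearMap.coe_sum', Finset.sum_apply]
    -- third derivative term vanishes: ∂_j (∂_i ∂_i φ) = ∂_i (∂_j ∂_i φ) = ∂_i 0 = 0
    have h3 : fderiv ℝ (pd (pd φ i) i) x (Pi.single j 1) = 0 := by
      have hsw : pd (pd (pd φ i) i) j x = pd (pd (pd φ i) j) i x := pd_comm_s7 (hpd i) i j x
      have hz : pd (pd φ i) j = fun _ => (0 : ℝ) := by
        funext y; exact hmix j i (Ne.symm hij) y
      show pd (pd (pd φ i) i) j x = 0
      rw [hsw, hz]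
      simp [pd, fderiv_const]
    rw [h3]
    have hsum2 : ∑ c, (fderiv ℝ (fun y => (pd φ c y) ^ 2) x) (Pi.single j 1)
        = 2 * pd φ j x * pd (pd φ j) j x := by
      rw [Finset.sum_congr rfl (fun k _ => hpow k)]
      refine Finset.sum_eq_single_of_mem j (Finset.mem_univ j) ?_
      intro k _ hk
      rw [hmix j k (Ne.symm hk) x]
      ring
    rw [hsum2]
    have hfj : fderiv ℝ φ x (Pi.single j 1) = pd φ j x := rfl
    rw [hfj, hdiag i j x]
    simp only [smul_eq_mul]
    ring
  -- hence fderiv g = 0 everywhere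
  have hzero : ∀ x, fderiv ℝ g x = 0 := by
    intro x
    ext v
    have hv : v = ∑ k, v k • (Pi.single k 1 : Fin n → ℝ) := by
      funext l
      simp [Finset.sum_apply, Pi.single_apply]
    rw [ContinuousLinearMap.zero_apply]
    conv_lhs => rw [hv]
    rw [map_sum]
    simp only [map_smul, hdir, smul_eq_mul, mul_zero, Finset.sum_const_zero]
  refine ⟨g 0, fun x => ?_⟩
  rw [hgeq x]
  exact is_const_of_fderiv_eq_zero hgdiff hzero x 0
end
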